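/- arXiv:1709.05661 — 2 statements merged into one kernel-verified Lean document; each statement's English description precedes it below -/
import Mathlib

section
/- Let j : U → ℝ be twice continuously differentiable on an open subset of L²(ω), let ū be a local minimizer of j over the convex set U_ad = {u ∈ L²(ω) : u_a ≤ u ≤ u_b a.e.}, and suppose there exist δ > 0 and h₄ > 0 such that (δ/2)‖ū − u‖²_{L²(ω)} ≤ (j'(ū) − j'(u))(ū − u) for all u ∈ U_ad near ū. If ū_h ∈ U_ad satisfies j'(ū)(ū_h − ū) ≥ 0 and j'_h(ū_h)(v − ū_h) ≥ 0 for all v in a discrete admissible set, and there exist u*_h with j'(ū)(ū − u*_h) = 0 and ‖ū − u*_h‖ ≤ Ch, ‖j'_h(w) − j'(w)‖ ≤ Ch^{2γ} uniformly, then ‖ū − ū_h‖_{L²(ω)} ≤ C h. -/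
set_option maxHeartbeats 1000000 in
/-- Abstract first-order error estimate for the control.
`U` stands for `L²(ω)`; `Uad` is the admissible set; `j'` and `jh'` are the derivatives
of the continuous and discrete reduced cost functionals (`j` being `C²`, `j'` is
Lipschitz with constant `C₀`); `γ ∈ (1/2,1]` is the elliptic regularity index.
Assuming the local quadratic growth of `j'` near `ū` (constant `δ`), the continuous and
discrete first-order optimality conditions, the existence of `u*_h ∈ U_{h,ad}` with
`j'(ū)(ū − u*_h) = 0` and `‖ū − u*_h‖ ≤ C₀ h`, and the uniform consistency bound
`‖j'_h(w) − j'(w)‖ ≤ C₀ h^{2γ}`, one gets `‖ū − ū_h‖_{L²(ω)} ≤ C h`. -/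
theorem stmt_14 {U : Type*} [NormedAddCommGroup U] [NormedSpace ℝ U]
    (δ C0 γ r : ℝ) (hδ : 0 < δ) (hC0 : 0 < C0)
    (hγ1 : 1 / 2 < γ) (hγ2 : γ ≤ 1) (hr : 0 < r) :
    ∃ C > 0, ∀ (h : ℝ), 0 < h → h ≤ 1 →
      ∀ (Uad : Set U) (j' jh' : U → U →L[ℝ] ℝ) (ubar ubarh ustar : U),
        ubar ∈ Uad → ubarh ∈ Uad → ustar ∈ Uad →
        -- quadratic growth of j' near ū on the admissible set
        (∀ u ∈ Uad, ‖u - ubar‖ ≤ r →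
          δ / 2 * ‖ubar - u‖ ^ 2 ≤ (j' ubar - j' u) (ubar - u)) →
        ‖ubarh - ubar‖ ≤ r →
        -- j is C²: its derivative is Lipschitz
        (∀ w₁ w₂ : U, ‖j' w₁ - j' w₂‖ ≤ C0 * ‖w₁ - w₂‖) →
        -- continuous and discrete first-order optimality conditions
        0 ≤ j' ubar (ubarh - ubar) →
        0 ≤ jh' ubarh (ustar - ubarh) →
        -- the auxiliary discrete control u*_h
        j' ubar (ubar - ustar) = 0 →
        ‖ubar - ustar‖ ≤ C0 * h →
        -- uniform consistency of the discrete derivative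
        (∀ w : U, ‖jh' w - j' w‖ ≤ C0 * h ^ (2 * γ)) →
        ‖ubar - ubarh‖ ≤ C * h := by
  refine ⟨2 * ((C0 + C0 ^ 2) + C0 ^ 2 + δ) / δ, by positivity, ?_⟩
  intro h hh0 hh1 Uad j' jh' ubar ubarh ustar hub huh hus hquad hnear hLip hopt hopth haux hdist hcons
  set A := C0 + C0 ^ 2 with hA
  set B := C0 ^ 2 with hB
  have hx0 : (0:ℝ) ≤ ‖ubar - ubarh‖ := norm_nonneg _
  -- h^{2γ} ≤ h
  have hpow : h ^ (2 * γ) ≤ h := by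
    have h1 : h ^ (2 * γ) ≤ h ^ (1:ℝ) :=
      Real.rpow_le_rpow_of_exponent_ge hh0 hh1 (by linarith)
    simpa using h1
  -- quadratic growth applied at ū_h
  have hQ : δ / 2 * ‖ubar - ubarh‖ ^ 2 ≤ j' ubar (ubar - ubarh) - j' ubarh (ubar - ubarh) := by
    have := hquad ubarh huh hnear
    simpa [ContinuousLinearMap.sub_apply] using this
  -- the continuous optimality condition
  have h1 : j' ubar (ubar - ubarh) ≤ 0 := by
    have e : (ubar - ubarh) = -(ubarh - ubar) := by abel
    rw [e, map_neg]; linarith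
  -- term 1 bound
  have hxrev : ‖ubarh - ubar‖ = ‖ubar - ubarh‖ := norm_sub_rev _ _
  have hvec : ‖ubarh - ustar‖ ≤ ‖ubar - ubarh‖ + C0 * h := by
    have e : ubarh - ustar = (ubarh - ubar) + (ubar - ustar) := by abel
    calc ‖ubarh - ustar‖ ≤ ‖ubarh - ubar‖ + ‖ubar - ustar‖ := by rw [e]; exact norm_add_le _ _
      _ ≤ ‖ubar - ubarh‖ + C0 * h := by rw [hxrev]; linarith
  have t1 : j' ubarh (ubarh - ustar) ≤ C0 * h * (‖ubar - ubarh‖ + C0 * h) := by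
    have e1 : j' ubarh (ubarh - ustar)
        = (j' ubarh - jh' ubarh) (ubarh - ustar) + jh' ubarh (ubarh - ustar) := by
      simp [ContinuousLinearMap.sub_apply]
    have e2 : jh' ubarh (ubarh - ustar) ≤ 0 := by
      have e : (ubarh - ustar) = -(ustar - ubarh) := by abel
      rw [e, map_neg]; linarith
    have e3 : (j' ubarh - jh' ubarh) (ubarh - ustar)
        ≤ ‖j' ubarh - jh' ubarh‖ * ‖ubarh - ustar‖ := by
      calc (j' ubarh - jh' ubarh) (ubarh - ustar)
          ≤ ‖(j' ubarh - jh' ubarh) (ubarh - ustar)‖ := le_abs_self _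
        _ ≤ ‖j' ubarh - jh' ubarh‖ * ‖ubarh - ustar‖ :=
            (j' ubarh - jh' ubarh).le_opNorm _
    have e4 : ‖j' ubarh - jh' ubarh‖ ≤ C0 * h := by
      have := hcons ubarh
      rw [norm_sub_rev] at this
      have : ‖j' ubarh - jh' ubarh‖ ≤ C0 * h ^ (2 * γ) := this
      nlinarith
    have e5 : ‖j' ubarh - jh' ubarh‖ * ‖ubarh - ustar‖
        ≤ C0 * h * (‖ubar - ubarh‖ + C0 * h) :=
      mul_le_mul e4 hvec (norm_nonneg _) (by positivity)
    linarith
  -- term 2 bound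
  have t2 : j' ubarh (ustar - ubar) ≤ C0 * ‖ubar - ubarh‖ * (C0 * h) := by
    have e0 : j' ubar (ustar - ubar) = 0 := by
      have e : (ustar - ubar) = -(ubar - ustar) := by abel
      rw [e, map_neg, haux, neg_zero]
    have e1 : j' ubarh (ustar - ubar)
        = (j' ubarh - j' ubar) (ustar - ubar) + j' ubar (ustar - ubar) := by
      simp [ContinuousLinearMap.sub_apply]
    have e3 : (j' ubarh - j' ubar) (ustar - ubar)
        ≤ ‖j' ubarh - j' ubar‖ * ‖ustar - ubar‖ := by
      calc (j' ubarh - j' ubar) (ustar - ubar)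
          ≤ ‖(j' ubarh - j' ubar) (ustar - ubar)‖ := le_abs_self _
        _ ≤ ‖j' ubarh - j' ubar‖ * ‖ustar - ubar‖ :=
            (j' ubarh - j' ubar).le_opNorm _
    have e4 : ‖j' ubarh - j' ubar‖ ≤ C0 * ‖ubar - ubarh‖ := by
      have := hLip ubarh ubar
      rwa [hxrev] at this
    have e5 : ‖ustar - ubar‖ ≤ C0 * h := by rw [norm_sub_rev]; exact hdist
    have e6 : ‖j' ubarh - j' ubar‖ * ‖ustar - ubar‖
        ≤ C0 * ‖ubar - ubarh‖ * (C0 * h) :=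
      mul_le_mul e4 e5 (norm_nonneg _) (by positivity)
    linarith
  -- splitting
  have hsplit : j' ubarh (ubarh - ubar)
      = j' ubarh (ubarh - ustar) + j' ubarh (ustar - ubar) := by
    rw [← map_add]; congr 1; abel
  have hneg : -(j' ubarh (ubar - ubarh)) = j' ubarh (ubarh - ubar) := by
    rw [← map_neg]; congr 1; abel
  have key : δ / 2 * ‖ubar - ubarh‖ ^ 2
      ≤ A * h * ‖ubar - ubarh‖ + B * h ^ 2 := by
    have : δ / 2 * ‖ubar - ubarh‖ ^ 2 ≤ j' ubarh (ubarh - ubar) := by linarith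
    rw [hsplit] at this
    nlinarith
  -- conclude
  by_contra hcon
  push_neg at hcon
  have hA0 : 0 < A := by positivity
  have hB0 : 0 < B := by positivity
  have hC2 : (2:ℝ) ≤ 2 * (A + B + δ) / δ := by
    rw [le_div_iff₀ hδ]
    nlinarith
  have hxh : h < ‖ubar - ubarh‖ := by
    calc h = 1 * h := (one_mul h).symm
      _ ≤ 2 * (A + B + δ) / δ * h := by
          apply mul_le_mul_of_nonneg_right _ hh0.le
          linarith
      _ < ‖ubar - ubarh‖ := hcon
  have hx' : 0 < ‖ubar - ubarh‖ := lt_trans hh0 hxh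
  have hcon' : 2 * (A + B + δ) * h < ‖ubar - ubarh‖ * δ := by
    rw [div_mul_eq_mul_div, div_lt_iff₀ hδ] at hcon
    linarith
  nlinarith [mul_lt_mul_of_pos_right hcon' hx',
    mul_lt_mul_of_pos_left hxh (mul_pos hB0 hh0),
    mul_lt_mul_of_pos_left hxh (mul_pos hδ hh0),
    mul_pos (mul_pos hδ hh0) hx', key]
end

section
/- Let G : B_ρ(Ψ̄) → V be defined by G(Ψ) = Ψ − L⁻¹ N(Ψ) where L is a fixed bounded invertible linear operator and N is C¹ with ‖∂N(Ψ₁) − ∂N(Ψ₂)‖_{L(V)} ≤ C‖Ψ₁ − Ψ₂‖ on B_ρ(Ψ̄), L = ∂N(Ψ̄), and ‖L⁻¹ N(Ψ̄)‖ ≤ Ĉ h^γ. Then for ρ and h sufficiently small (ρ ≤ 1/(2Ĉ′) and Ĉ(h^γ + ρ²) ≤ ρ with appropriate constants), G maps B_ρ(Ψ̄) into itself and is a strict contraction, hence N has a unique zero in B_ρ(Ψ̄). -/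
/-!
With `L = ∂N(Ψ̄)`, the map `G Ψ = Ψ - L⁻¹ N Ψ` has derivative `L⁻¹ (L - ∂N(Ψ))`, which by the
Lipschitz bound on `∂N` has norm at most `‖L⁻¹‖ C ρ ≤ 1/2` on `B_ρ(Ψ̄)` once `ρ` is small. The
mean value inequality makes `G` a `1/2`-contraction there, and the residual bound
`‖G Ψ̄ - Ψ̄‖ = ‖L⁻¹ N Ψ̄‖ ≤ ρ/2` keeps the ball invariant. Banach's fixed point theorem on the
closed ball then gives a unique fixed point of `G`, i.e. a unique zero of `N`.
-/

open Metric Set Function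

section FixedPoint

variable {α : Type*} [MetricSpace α]

theorem mapsTo_closedBall_of_dist_le {f : α → α} {c : α} {ρ k : ℝ} (hk : 0 ≤ k)
    (hf : ∀ x ∈ closedBall c ρ, dist (f x) (f c) ≤ k * dist x c)
    (hc : dist (f c) c ≤ (1 - k) * ρ) :
    MapsTo f (closedBall c ρ) (closedBall c ρ) := by
  intro x hx
  rw [mem_closedBall] at hx ⊢
  calc dist (f x) c ≤ dist (f x) (f c) + dist (f c) c := dist_triangle _ _ _
    _ ≤ k * ρ + (1 - k) * ρ := by
        gcongr
        exact (hf x (mem_closedBall.2 hx)).trans (by gcongr)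
    _ = ρ := by ring

theorem existsUnique_isFixedPt_of_dist_le [CompleteSpace α] {f : α → α} {s : Set α} {k : ℝ}
    (hs : IsClosed s) (hne : s.Nonempty) (hfs : MapsTo f s s)
    (hf : ∀ x ∈ s, ∀ y ∈ s, dist (f x) (f y) ≤ k * dist x y) (hk : k < 1) :
    ∃! x, x ∈ s ∧ IsFixedPt f x := by
  obtain ⟨x₀, hx₀⟩ := hne
  have hcontr : ContractingWith k.toNNReal (hfs.restrict f s s) :=
    ⟨Real.toNNReal_lt_one.2 hk, LipschitzWith.of_dist_le' fun x y => hf x x.2 y y.2⟩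
  obtain ⟨x, hxs, hfix, -⟩ :=
    hcontr.exists_fixedPoint' hs.isComplete hfs hx₀ (edist_ne_top _ _)
  refine ⟨x, ⟨hxs, hfix⟩, fun y ⟨hys, hyfix⟩ => dist_le_zero.1 ?_⟩
  have h := hf y hys x hxs
  rw [hyfix.eq, hfix.eq] at h
  nlinarith [dist_nonneg (x := y) (y := x)]

end FixedPoint

section SimplifiedNewton

variable {E F : Type*} [NormedAddCommGroup E] [NormedSpace ℝ E]
  [NormedAddCommGroup F] [NormedSpace ℝ F]

def simplifiedNewtonMap (L : E ≃L[ℝ] F) (N : E → F) (Ψ : E) : E :=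
  Ψ - L.symm (N Ψ)

variable {L : E ≃L[ℝ] F} {N : E → F}

theorem isFixedPt_simplifiedNewtonMap_iff {Ψ : E} :
    IsFixedPt (simplifiedNewtonMap L N) Ψ ↔ N Ψ = 0 := by
  simp [IsFixedPt, simplifiedNewtonMap]

theorem hasFDerivAt_simplifiedNewtonMap {N' : E →L[ℝ] F} {Ψ : E} (hN : HasFDerivAt N N' Ψ) :
    HasFDerivAt (simplifiedNewtonMap L N)
      ((L.symm : F →L[ℝ] E).comp ((L : E →L[ℝ] F) - N')) Ψ := by
  have hderiv : (L.symm : F →L[ℝ] E).comp ((L : E →L[ℝ] F) - N') =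
      ContinuousLinearMap.id ℝ E - (L.symm : F →L[ℝ] E).comp N' := by
    ext v
    simp
  rw [hderiv]
  exact (hasFDerivAt_id Ψ).sub ((L.symm : F →L[ℝ] E).hasFDerivAt.comp Ψ hN)

theorem norm_simplifiedNewtonMap_sub_le {DN : E → E →L[ℝ] F} {s : Set E} {δ : ℝ}
    (hs : Convex ℝ s) (hDN : ∀ x ∈ s, HasFDerivAt N (DN x) x)
    (hδ : ∀ x ∈ s, ‖(L : E →L[ℝ] F) - DN x‖ ≤ δ) {x y : E} (hx : x ∈ s) (hy : y ∈ s) :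
    ‖simplifiedNewtonMap L N x - simplifiedNewtonMap L N y‖ ≤
      ‖(L.symm : F →L[ℝ] E)‖ * δ * ‖x - y‖ := by
  refine hs.norm_image_sub_le_of_norm_hasFDerivWithin_le
    (fun z hz => (hasFDerivAt_simplifiedNewtonMap (hDN z hz)).hasFDerivWithinAt)
    (fun z hz => ?_) hy hx
  exact (ContinuousLinearMap.opNorm_comp_le _ _).trans (by gcongr; exact hδ z hz)

end SimplifiedNewton

theorem stmt_18_general {V : Type*} [NormedAddCommGroup V] [NormedSpace ℝ V] [CompleteSpace V]
    (Ψbar : V) (N : V → V) (DN : V → (V →L[ℝ] V)) (L : V ≃L[ℝ] V)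
    (Clip Chat γ h : ℝ) (hClip : 0 < Clip)
    (hDN : ∀ Ψ : V, HasFDerivAt N (DN Ψ) Ψ)
    (hL : (L : V →L[ℝ] V) = DN Ψbar)
    (hlip : ∀ Ψ₁ Ψ₂ : V, ‖DN Ψ₁ - DN Ψ₂‖ ≤ Clip * ‖Ψ₁ - Ψ₂‖)
    (hres : ‖(L.symm : V →L[ℝ] V) (N Ψbar)‖ ≤ Chat * h ^ γ) :
    ∃ ρ₀ > 0, ∀ ρ : ℝ, 0 < ρ → ρ ≤ ρ₀ → Chat * h ^ γ ≤ ρ / 2 →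
      -- G maps the closed ball into itself
      (∀ Ψ ∈ Metric.closedBall Ψbar ρ,
        (Ψ - (L.symm : V →L[ℝ] V) (N Ψ)) ∈ Metric.closedBall Ψbar ρ) ∧
      -- G is a strict contraction on the closed ball
      (∃ k : ℝ, 0 ≤ k ∧ k < 1 ∧
        ∀ Ψ₁ ∈ Metric.closedBall Ψbar ρ, ∀ Ψ₂ ∈ Metric.closedBall Ψbar ρ,
          ‖(Ψ₁ - (L.symm : V →L[ℝ] V) (N Ψ₁)) - (Ψ₂ - (L.symm : V →L[ℝ] V) (N Ψ₂))‖ ≤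
            k * ‖Ψ₁ - Ψ₂‖) ∧
      -- hence N has a unique zero in the closed ball
      (∃! Ψ : V, Ψ ∈ Metric.closedBall Ψbar ρ ∧ N Ψ = 0) := by
  set M := ‖(L.symm : V →L[ℝ] V)‖
  refine ⟨1 / (2 * (M * Clip + 1)), by positivity, fun ρ hρ hρ₀ hsmall => ?_⟩
  set k := M * (Clip * ρ)
  have hk0 : 0 ≤ k := by positivity
  have hk : k ≤ 1 / 2 := by
    rw [le_div_iff₀ (by positivity)] at hρ₀
    nlinarith
  have hcontr : ∀ x ∈ closedBall Ψbar ρ, ∀ y ∈ closedBall Ψbar ρ,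
      ‖simplifiedNewtonMap L N x - simplifiedNewtonMap L N y‖ ≤ k * ‖x - y‖ :=
    fun x hx y hy => norm_simplifiedNewtonMap_sub_le (convex_closedBall _ _) (fun z _ => hDN z)
      (fun z hz => hL ▸ (hlip _ _).trans (by gcongr; rwa [norm_sub_rev, ← dist_eq_norm])) hx hy
  have hdist : ∀ x ∈ closedBall Ψbar ρ, ∀ y ∈ closedBall Ψbar ρ,
      dist (simplifiedNewtonMap L N x) (simplifiedNewtonMap L N y) ≤ k * dist x y := by
    simpa only [dist_eq_norm] using hcontr
  have hcenter : Ψbar ∈ closedBall Ψbar ρ := mem_closedBall_self hρ.le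
  have hmaps : MapsTo (simplifiedNewtonMap L N) (closedBall Ψbar ρ) (closedBall Ψbar ρ) :=
    mapsTo_closedBall_of_dist_le hk0 (fun x hx => hdist x hx Ψbar hcenter) <| by
      rw [dist_eq_norm, simplifiedNewtonMap, sub_sub_cancel_left, norm_neg]
      exact hres.trans (hsmall.trans (by nlinarith))
  refine ⟨hmaps, ⟨k, hk0, by linarith, hcontr⟩, ?_⟩
  simpa only [isFixedPt_simplifiedNewtonMap_iff] using
    existsUnique_isFixedPt_of_dist_le isClosed_closedBall ⟨Ψbar, hcenter⟩ hmaps hdist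
      (by linarith)

/-- (Banach fixed point / Newton–Kantorovich argument for the
discrete von Kármán problem.) `V` is a Banach space, `N` the (discrete) nonlinear
residual map with derivative `DN`, `L = ∂N(Ψ̄)` a bounded invertible linear operator,
`DN` Lipschitz with constant `Clip`, and residual bound `‖L⁻¹ N(Ψ̄)‖ ≤ Ĉ h^γ`.
For `ρ` and `h` sufficiently small (in particular `Ĉ h^γ ≤ ρ/2`), the map
`G(Ψ) = Ψ − L⁻¹ N(Ψ)` maps the closed ball `B_ρ(Ψ̄)` into itself and is a strict
contraction there; hence `N` has a unique zero in `B_ρ(Ψ̄)`. -/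
theorem stmt_18 {V : Type*} [NormedAddCommGroup V] [NormedSpace ℝ V] [CompleteSpace V]
    (Ψbar : V) (N : V → V) (DN : V → (V →L[ℝ] V)) (L : V ≃L[ℝ] V)
    (Clip Chat γ h : ℝ) (hClip : 0 < Clip) (hChat : 0 < Chat) (hγ : 0 < γ) (hh : 0 < h)
    (hDN : ∀ Ψ : V, HasFDerivAt N (DN Ψ) Ψ)
    (hL : (L : V →L[ℝ] V) = DN Ψbar)
    (hlip : ∀ Ψ₁ Ψ₂ : V, ‖DN Ψ₁ - DN Ψ₂‖ ≤ Clip * ‖Ψ₁ - Ψ₂‖)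
    (hres : ‖(L.symm : V →L[ℝ] V) (N Ψbar)‖ ≤ Chat * h ^ γ) :
    ∃ ρ₀ > 0, ∀ ρ : ℝ, 0 < ρ → ρ ≤ ρ₀ → Chat * h ^ γ ≤ ρ / 2 →
      -- G maps the closed ball into itself
      (∀ Ψ ∈ Metric.closedBall Ψbar ρ,
        (Ψ - (L.symm : V →L[ℝ] V) (N Ψ)) ∈ Metric.closedBall Ψbar ρ) ∧
      -- G is a strict contraction on the closed ball
      (∃ k : ℝ, 0 ≤ k ∧ k < 1 ∧
        ∀ Ψ₁ ∈ Metric.closedBall Ψbar ρ, ∀ Ψ₂ ∈ Metric.closedBall Ψbar ρ,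
          ‖(Ψ₁ - (L.symm : V →L[ℝ] V) (N Ψ₁)) - (Ψ₂ - (L.symm : V →L[ℝ] V) (N Ψ₂))‖ ≤
            k * ‖Ψ₁ - Ψ₂‖) ∧
      -- hence N has a unique zero in the closed ball
      (∃! Ψ : V, Ψ ∈ Metric.closedBall Ψbar ρ ∧ N Ψ = 0) :=
  stmt_18_general Ψbar N DN L Clip Chat γ h hClip hDN hL hlip hres
end
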